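/- Let U, V, W be nonempty compact subsets of ℂ and p ∈ [1,∞]. Then M_fin,p = lim_{n→∞} M_{n,p} = M_p; that is, the supremum of ‖F‖_p over all finite tridiagonal matrices F ∈ M_fin(U,V,W) equals the supremum M_p of ‖B‖_p over all bi-infinite B ∈ M(U,V,W), and the suprema M_{n,p} over n×n tridiagonal matrices converge to M_p as n → ∞. -/

import Mathlib

open scoped ENNReal

noncomputable section

/-- The sequence space `ℓᵖ(ℤ)` (complex valued). -/
abbrev SeqZ (p : ℝ≥0∞) : Type := lp (fun _ : ℤ => ℂ) p
/-- The sequence space `ℓᵖ(ℕ)` (complex valued). -/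
abbrev SeqN (p : ℝ≥0∞) : Type := lp (fun _ : ℕ => ℂ) p

/-- The three diagonals take values in `U`, `V`, `W` respectively. -/
def RangesIn (U V W : Set ℂ) {ι : Type*} (u v w : ι → ℂ) : Prop :=
  (∀ i, u i ∈ U) ∧ (∀ i, v i ∈ V) ∧ (∀ i, w i ∈ W)

/-- `A` acts on `ℓᵖ(ℤ)` as the bi-infinite tridiagonal matrix with subdiagonal `u`
(entries `a_{i,i-1} = u i`), main diagonal `v` and superdiagonal `w` (`a_{i,i+1} = w i`). -/
def BiActs {p : ℝ≥0∞} [Fact (1 ≤ p)] (A : SeqZ p →L[ℂ] SeqZ p) (u v w : ℤ → ℂ) : Prop :=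
  ∀ (x : SeqZ p) (i : ℤ),
    (A x : ∀ _ : ℤ, ℂ) i =
      u i * (x : ∀ _ : ℤ, ℂ) (i - 1) + v i * (x : ∀ _ : ℤ, ℂ) i +
        w i * (x : ∀ _ : ℤ, ℂ) (i + 1)

/-- `A` acts on `ℓᵖ(ℕ)` as the semi-infinite tridiagonal matrix with subdiagonal `u`
(entries `a_{i,i-1} = u i` for `i ≥ 1`), main diagonal `v` and superdiagonal `w`. -/
def SemiActs {p : ℝ≥0∞} [Fact (1 ≤ p)] (A : SeqN p →L[ℂ] SeqN p) (u v w : ℕ → ℂ) : Prop :=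
  ∀ (x : SeqN p) (i : ℕ),
    (A x : ∀ _ : ℕ, ℂ) i =
      (if i = 0 then 0 else u i * (x : ∀ _ : ℕ, ℂ) (i - 1)) + v i * (x : ∀ _ : ℕ, ℂ) i +
        w i * (x : ∀ _ : ℕ, ℂ) (i + 1)

/-- membership in `M(U,V,W)`: bi-infinite tridiagonal operators over `(U,V,W)`. -/
def MemM (U V W : Set ℂ) {p : ℝ≥0∞} [Fact (1 ≤ p)] (A : SeqZ p →L[ℂ] SeqZ p) : Prop :=
  ∃ u v w : ℤ → ℂ, RangesIn U V W u v w ∧ BiActs A u v w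

/-- membership in `M₊(U,V,W)`: semi-infinite tridiagonal operators over `(U,V,W)`. -/
def MemMPlus (U V W : Set ℂ) {p : ℝ≥0∞} [Fact (1 ≤ p)] (A : SeqN p →L[ℂ] SeqN p) : Prop :=
  ∃ u v w : ℕ → ℂ, RangesIn U V W u v w ∧ SemiActs A u v w

/-- pseudoergodicity of bi-infinite diagonal data: every finite pattern of diagonals over
`(U,V,W)` is reproduced to arbitrary accuracy somewhere along the diagonals. -/
def PseudoergodicZ (U V W : Set ℂ) (u v w : ℤ → ℂ) : Prop :=
  ∀ (n : ℕ) (bu bv bw : Fin n → ℂ), RangesIn U V W bu bv bw →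
    ∀ ε : ℝ, 0 < ε → ∃ k : ℤ, ∀ i : Fin n,
      ‖u (k + (i : ℕ)) - bu i‖ < ε ∧ ‖v (k + (i : ℕ)) - bv i‖ < ε ∧
        ‖w (k + (i : ℕ)) - bw i‖ < ε

/-- pseudoergodicity of semi-infinite diagonal data. -/
def PseudoergodicN (U V W : Set ℂ) (u v w : ℕ → ℂ) : Prop :=
  ∀ (n : ℕ) (bu bv bw : Fin n → ℂ), RangesIn U V W bu bv bw →
    ∀ ε : ℝ, 0 < ε → ∃ k : ℕ, ∀ i : Fin n,
      ‖u (k + (i : ℕ)) - bu i‖ < ε ∧ ‖v (k + (i : ℕ)) - bv i‖ < ε ∧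
        ‖w (k + (i : ℕ)) - bw i‖ < ε

/-- membership in `PE(U,V,W)`: pseudoergodic bi-infinite operators. -/
def MemPE (U V W : Set ℂ) {p : ℝ≥0∞} [Fact (1 ≤ p)] (A : SeqZ p →L[ℂ] SeqZ p) : Prop :=
  ∃ u v w : ℤ → ℂ, RangesIn U V W u v w ∧ PseudoergodicZ U V W u v w ∧ BiActs A u v w

/-- membership in `PE₊(U,V,W)`: pseudoergodic semi-infinite operators. -/
def MemPEPlus (U V W : Set ℂ) {p : ℝ≥0∞} [Fact (1 ≤ p)] (A : SeqN p →L[ℂ] SeqN p) : Prop :=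
  ∃ u v w : ℕ → ℂ, RangesIn U V W u v w ∧ PseudoergodicN U V W u v w ∧ SemiActs A u v w

/-- `(U,V,W)` is compatible: every operator in `M(U,V,W)` is invertible on `ℓᵖ(ℤ)`
for every `p ∈ [1,∞]`. -/
def Compatible (U V W : Set ℂ) : Prop :=
  ∀ (p : ℝ≥0∞) [Fact (1 ≤ p)], ∀ A : SeqZ p →L[ℂ] SeqZ p, MemM U V W A → IsUnit A

/-- `α(A)`: the dimension of the kernel. -/
def alphaDim {E : Type*} [NormedAddCommGroup E] [NormedSpace ℂ E] (A : E →L[ℂ] E) : ℕ :=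
  Module.finrank ℂ (LinearMap.ker (A : E →ₗ[ℂ] E))

/-- `β(A)`: the codimension of the range. -/
def betaDim {E : Type*} [NormedAddCommGroup E] [NormedSpace ℂ E] (A : E →L[ℂ] E) : ℕ :=
  Module.finrank ℂ (E ⧸ LinearMap.range (A : E →ₗ[ℂ] E))

/-- `A` is a Fredholm operator: finite-dimensional kernel and finite-codimensional range. -/
def IsFredholmOp {E : Type*} [NormedAddCommGroup E] [NormedSpace ℂ E] (A : E →L[ℂ] E) : Prop :=
  FiniteDimensional ℂ (LinearMap.ker (A : E →ₗ[ℂ] E)) ∧ FiniteDimensional ℂ (E ⧸ LinearMap.range (A : E →ₗ[ℂ] E))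

/-- the Fredholm index `ind A = α(A) - β(A)`. -/
def fredIndex {E : Type*} [NormedAddCommGroup E] [NormedSpace ℂ E] (A : E →L[ℂ] E) : ℤ :=
  (alphaDim A : ℤ) - (betaDim A : ℤ)

/-- `(U,V,W)` is compatible and the common Fredholm index `κ(U,V,W)` of the semi-infinite
operators in `M₊(U,V,W)` equals `k`. -/
def KappaIs (U V W : Set ℂ) (k : ℤ) : Prop :=
  Compatible U V W ∧
    ∀ (p : ℝ≥0∞) [Fact (1 ≤ p)], ∀ B : SeqN p →L[ℂ] SeqN p, MemMPlus U V W B →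
      IsFredholmOp B ∧ fredIndex B = k

/-- union of the `ℓᵖ`-spectra of all operators in `M(U,V,W)`, at exponent `p`. -/
def specSetZAt (U V W : Set ℂ) (p : ℝ≥0∞) [Fact (1 ≤ p)] : Set ℂ :=
  {lam | ∃ C : SeqZ p →L[ℂ] SeqZ p, MemM U V W C ∧ lam ∈ spectrum ℂ C}

/-- union of the `ℓᵖ`-spectra of all operators in `M₊(U,V,W)`, at exponent `p`. -/
def specSetNAt (U V W : Set ℂ) (p : ℝ≥0∞) [Fact (1 ≤ p)] : Set ℂ :=
  {lam | ∃ C : SeqN p →L[ℂ] SeqN p, MemMPlus U V W C ∧ lam ∈ spectrum ℂ C}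

/-- `Σ(U,V,W)`: the union of the spectra of all operators in `M(U,V,W)`. -/
def SigmaSet (U V W : Set ℂ) : Set ℂ :=
  ⋃ (p : ℝ≥0∞), ⋃ (h : Fact (1 ≤ p)), @specSetZAt U V W p h

/-- `Σ₊(U,V,W)`: the union of the spectra of all operators in `M₊(U,V,W)`. -/
def SigmaPlusSet (U V W : Set ℂ) : Set ℂ :=
  ⋃ (p : ℝ≥0∞), ⋃ (h : Fact (1 ≤ p)), @specSetNAt U V W p h

/-- `V - λ`. -/
def shiftSet (V : Set ℂ) (lam : ℂ) : Set ℂ := (fun v => v - lam) '' V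

/-- `Σ_k(U,V,W) = {λ : (U, V-λ, W) compatible with κ(U, V-λ, W) = k}`. -/
def SigmaK (U V W : Set ℂ) (k : ℤ) : Set ℂ := {lam | KappaIs U (shiftSet V lam) W k}

/-- `Σ_{±1} = Σ_{-1} ∪ Σ_1`. -/
def SigmaPM (U V W : Set ℂ) : Set ℂ := SigmaK U V W (-1) ∪ SigmaK U V W 1

/-- the ellipse `E(u,v,w) = {u t + v + w/t : |t| = 1}`. -/
def ellipse (u v w : ℂ) : Set ℂ := (fun t : ℂ => u * t + v + w / t) '' {t : ℂ | ‖t‖ = 1}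

open Polynomial in
open Classical in
/-- winding number of the loop `t ↦ u t + v + w/t` (`t` on the unit circle, traversed
counter-clockwise) around `lam`, computed, via the argument principle, as the number of
roots (with multiplicity) of `u t² + (v - λ) t + w` in the open unit disk minus the order
of the pole at `0`.  (Valid whenever `lam` does not lie on the ellipse itself.) -/
def windingAt (u v w lam : ℂ) : ℤ :=
  (((C u * X ^ 2 + C (v - lam) * X + C w).roots.filter (fun z => ‖z‖ < 1)).card : ℤ) - 1

/-- `lam` lies inside the oriented ellipse `E(u,v,w)`: not on it, nonzero winding number. -/
def insideEllipse (u v w lam : ℂ) : Prop :=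
  lam ∉ ellipse u v w ∧ windingAt u v w lam ≠ 0

/-- `E_∩`: points inside all the ellipses `E(u,v,w)`, `(u,v,w) ∈ U × V × W`. -/
def Ecap (U V W : Set ℂ) : Set ℂ :=
  {lam | ∀ u ∈ U, ∀ v ∈ V, ∀ w ∈ W, insideEllipse u v w lam}

/-- `E₁`: points of `E_∩` circumnavigated clockwise (winding number `-1`) by all ellipses. -/
def Eone (U V W : Set ℂ) : Set ℂ :=
  {lam ∈ Ecap U V W | ∀ u ∈ U, ∀ v ∈ V, ∀ w ∈ W, windingAt u v w lam = -1}

/-- `E_{-1}`: points of `E_∩` circumnavigated counter-clockwise (winding number `1`). -/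
def EmOne (U V W : Set ℂ) : Set ℂ :=
  {lam ∈ Ecap U V W | ∀ u ∈ U, ∀ v ∈ V, ∀ w ∈ W, windingAt u v w lam = 1}

/-- `E_{±1} = E_{-1} ∪ E₁`. -/
def Epm (U V W : Set ℂ) : Set ℂ := EmOne U V W ∪ Eone U V W

/-- `E_∪`: the union of the filled ellipses. -/
def Ecup (U V W : Set ℂ) : Set ℂ :=
  ⋃ (u ∈ U) (v ∈ V) (w ∈ W), convexHull ℝ (ellipse u v w)

/-- `sup` of moduli over a set, e.g. `u^* = max_{u ∈ U} |u|`. -/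
def supAbs (S : Set ℂ) : ℝ := sSup ((fun z : ℂ => ‖z‖) '' S)

/-- `inf` of moduli over a set, e.g. `u_* = min_{u ∈ U} |u|`. -/
def infAbs (S : Set ℂ) : ℝ := sInf ((fun z : ℂ => ‖z‖) '' S)

/-- `M_p = sup_{B ∈ M(U,V,W)} ‖B‖_p`. -/
def Mnorm (U V W : Set ℂ) (p : ℝ≥0∞) [Fact (1 ≤ p)] : ℝ :=
  sSup {x : ℝ | ∃ B : SeqZ p →L[ℂ] SeqZ p, MemM U V W B ∧ x = ‖B‖}

/-- `N_p = sup_{B ∈ M(U,V,W)} ‖B⁻¹‖_p`. -/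
def Nnorm (U V W : Set ℂ) (p : ℝ≥0∞) [Fact (1 ≤ p)] : ℝ :=
  sSup {x : ℝ | ∃ B : SeqZ p →L[ℂ] SeqZ p, MemM U V W B ∧ x = ‖Ring.inverse B‖}

/-- `M_{+,p} = sup_{B₊ ∈ M₊(U,V,W)} ‖B₊‖_p`. -/
def MnormPlus (U V W : Set ℂ) (p : ℝ≥0∞) [Fact (1 ≤ p)] : ℝ :=
  sSup {x : ℝ | ∃ B : SeqN p →L[ℂ] SeqN p, MemMPlus U V W B ∧ x = ‖B‖}

/-- `N_{+,p} = sup_{B₊ ∈ M₊(U,V,W)} ‖B₊⁻¹‖_p`. -/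
def NnormPlus (U V W : Set ℂ) (p : ℝ≥0∞) [Fact (1 ≤ p)] : ℝ :=
  sSup {x : ℝ | ∃ B : SeqN p →L[ℂ] SeqN p, MemMPlus U V W B ∧ x = ‖Ring.inverse B‖}

/-- `p` is favourable for `(U,V,W)`: `‖A₊⁻¹‖_p = N_{+,p} = N_p` for all `A₊ ∈ PE₊(U,V,W)`. -/
def Favourable (U V W : Set ℂ) (p : ℝ≥0∞) [Fact (1 ≤ p)] : Prop :=
  ∀ A : SeqN p →L[ℂ] SeqN p, MemPEPlus U V W A →
    ‖Ring.inverse A‖ = NnormPlus U V W p ∧ NnormPlus U V W p = Nnorm U V W p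

/-- the `n × n` tridiagonal matrix with diagonals `u` (sub), `v` (main), `w` (super). -/
def JacobiMatrix {n : ℕ} (u v w : Fin n → ℂ) : Matrix (Fin n) (Fin n) ℂ :=
  fun i j =>
    if ((i : ℕ) : ℤ) = ((j : ℕ) : ℤ) + 1 then u i
    else if i = j then v i
    else if ((j : ℕ) : ℤ) = ((i : ℕ) : ℤ) + 1 then w i
    else 0

/-- the `ℓᵖ` norm of a finite complex vector. -/
def pVecNorm (p : ℝ≥0∞) [Fact (1 ≤ p)] {n : ℕ} (x : Fin n → ℂ) : ℝ :=
  ‖(WithLp.equiv p (Fin n → ℂ)).symm x‖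

/-- the operator norm of an `n × n` matrix acting on `(ℂⁿ, ‖·‖_p)`. -/
def matOpNorm (p : ℝ≥0∞) [Fact (1 ≤ p)] {n : ℕ} (F : Matrix (Fin n) (Fin n) ℂ) : ℝ :=
  sInf {c : ℝ | 0 ≤ c ∧ ∀ x : Fin n → ℂ, pVecNorm p (F.mulVec x) ≤ c * pVecNorm p x}

/-- the `p`-operator norm of the inverse matrix. -/
def matInvNorm (p : ℝ≥0∞) [Fact (1 ≤ p)] {n : ℕ} (F : Matrix (Fin n) (Fin n) ℂ) : ℝ :=
  matOpNorm p F⁻¹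

/-- `M_{n,p}`: sup of the `p`-norms of the `n × n` tridiagonal matrices over `(U,V,W)`. -/
def MnormFinN (U V W : Set ℂ) (p : ℝ≥0∞) [Fact (1 ≤ p)] (n : ℕ) : ℝ :=
  sSup {x : ℝ | ∃ u v w : Fin n → ℂ, RangesIn U V W u v w ∧
    x = matOpNorm p (JacobiMatrix u v w)}

/-- `M_{fin,p}`: sup of the `p`-norms of all finite tridiagonal matrices over `(U,V,W)`. -/
def MnormFin (U V W : Set ℂ) (p : ℝ≥0∞) [Fact (1 ≤ p)] : ℝ :=
  sSup {x : ℝ | ∃ (n : ℕ) (u v w : Fin n → ℂ), RangesIn U V W u v w ∧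
    x = matOpNorm p (JacobiMatrix u v w)}

/-- `N_{fin,p}`: sup of the `p`-norms of the inverses of all finite tridiagonal matrices. -/
def NnormFin (U V W : Set ℂ) (p : ℝ≥0∞) [Fact (1 ≤ p)] : ℝ :=
  sSup {x : ℝ | ∃ (n : ℕ) (u v w : Fin n → ℂ), RangesIn U V W u v w ∧
    x = matInvNorm p (JacobiMatrix u v w)}

/-- entry `(i,j)` of the bi-infinite tridiagonal matrix with diagonals `u`, `v`, `w`. -/
def secEntryZ (u v w : ℤ → ℂ) (i j : ℤ) : ℂ :=
  if i = j + 1 then u i else if i = j then v i else if j = i + 1 then w i else 0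

/-- the finite section `(a_{ij})_{i,j=l}^{r}` of the bi-infinite tridiagonal matrix. -/
def finSecZ (u v w : ℤ → ℂ) (l r : ℤ) :
    Matrix (Fin (r + 1 - l).toNat) (Fin (r + 1 - l).toNat) ℂ :=
  fun i j => secEntryZ u v w (l + (i : ℕ)) (l + (j : ℕ))

/-- entry `(i,j)` of the semi-infinite tridiagonal matrix with diagonals `u`, `v`, `w`. -/
def secEntryN (u v w : ℕ → ℂ) (i j : ℕ) : ℂ :=
  if i = j + 1 then u i else if i = j then v i else if j = i + 1 then w i else 0

/-- the `n`-th finite section (first `n` rows and columns) of the semi-infinite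
tridiagonal matrix with diagonals `u`, `v`, `w`. -/
def finSecN (u v w : ℕ → ℂ) (n : ℕ) : Matrix (Fin n) (Fin n) ℂ :=
  fun i j => secEntryN u v w i j

/-- stability of the sequence of finite sections of a bi-infinite tridiagonal matrix with
cut-off sequences `l`, `r`: eventually invertible with uniformly bounded inverses. -/
def StableSecsZ (p : ℝ≥0∞) [Fact (1 ≤ p)] (u v w : ℤ → ℂ) (l r : ℕ → ℤ) : Prop :=
  ∃ (n₀ : ℕ) (c : ℝ), ∀ n, n₀ ≤ n →
    IsUnit (finSecZ u v w (l n) (r n)) ∧ matInvNorm p (finSecZ u v w (l n) (r n)) ≤ c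

/-- stability of the sequence of finite sections of a semi-infinite tridiagonal matrix. -/
def StableSecsN (p : ℝ≥0∞) [Fact (1 ≤ p)] (u v w : ℕ → ℂ) (r : ℕ → ℕ) : Prop :=
  ∃ (n₀ : ℕ) (c : ℝ), ∀ n, n₀ ≤ n →
    IsUnit (finSecN u v w (r n)) ∧ matInvNorm p (finSecN u v w (r n)) ≤ c

/-- the full finite section method applies to every operator in `M(U,V,W)`:
the operator is invertible and the finite sections `(a_{ij})_{i,j=-n}^{n}` are stable. -/
def FullFSMAppliesZ (U V W : Set ℂ) : Prop :=
  ∀ (p : ℝ≥0∞) [Fact (1 ≤ p)], ∀ u v w : ℤ → ℂ, RangesIn U V W u v w →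
    ∀ A : SeqZ p →L[ℂ] SeqZ p, BiActs A u v w →
      IsUnit A ∧ StableSecsZ p u v w (fun n => -(n : ℤ)) (fun n => (n : ℤ))

/-- the full finite section method applies to every operator in `M₊(U,V,W)`:
the operator is invertible and the finite sections `(a_{ij})_{i,j=1}^{n}` are stable. -/
def FullFSMAppliesN (U V W : Set ℂ) : Prop :=
  ∀ (p : ℝ≥0∞) [Fact (1 ≤ p)], ∀ u v w : ℕ → ℂ, RangesIn U V W u v w →
    ∀ A : SeqN p →L[ℂ] SeqN p, SemiActs A u v w →
      IsUnit A ∧ StableSecsN p u v w (fun n => n)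

/-- one operator in `PE₊(U,V,W)` is invertible (on some, equivalently each, `ℓᵖ(ℕ)`). -/
def PEPlusInvAt (U V W : Set ℂ) (p : ℝ≥0∞) [Fact (1 ≤ p)] : Prop :=
  ∃ B : SeqN p →L[ℂ] SeqN p, MemPEPlus U V W B ∧ IsUnit B

def ExistsInvPEPlus (U V W : Set ℂ) : Prop :=
  ∃ (p : ℝ≥0∞) (h : Fact (1 ≤ p)), @PEPlusInvAt U V W p h

/-- one operator in `PE₊(U,V,W)` is Fredholm of index `0`. -/
def PEPlusFred0At (U V W : Set ℂ) (p : ℝ≥0∞) [Fact (1 ≤ p)] : Prop :=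
  ∃ B : SeqN p →L[ℂ] SeqN p, MemPEPlus U V W B ∧ IsFredholmOp B ∧ fredIndex B = 0

def ExistsFred0PEPlus (U V W : Set ℂ) : Prop :=
  ∃ (p : ℝ≥0∞) (h : Fact (1 ≤ p)), @PEPlusFred0At U V W p h

/-- all operators in `M₊(U,V,W)` are invertible (on every `ℓᵖ(ℕ)`). -/
def AllMPlusInv (U V W : Set ℂ) : Prop :=
  ∀ (p : ℝ≥0∞) [Fact (1 ≤ p)], ∀ B : SeqN p →L[ℂ] SeqN p, MemMPlus U V W B → IsUnit B

/-- the `ε`-pseudospectrum of a bounded operator (the spectrum together with the points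
where the resolvent has norm `> 1/ε`). -/
def pspec {E : Type*} [NormedAddCommGroup E] [NormedSpace ℂ E] (ε : ℝ)
    (A : E →L[ℂ] E) : Set ℂ :=
  {lam | ¬IsUnit (A - lam • (1 : E →L[ℂ] E)) ∨
    1 / ε < ‖Ring.inverse (A - lam • (1 : E →L[ℂ] E))‖}

/-- the `ε`-pseudospectrum of an `n × n` matrix, in the `p`-operator norm. -/
def pspecMat (p : ℝ≥0∞) [Fact (1 ≤ p)] {n : ℕ} (ε : ℝ) (F : Matrix (Fin n) (Fin n) ℂ) :
    Set ℂ :=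
  {lam | ¬IsUnit (F - lam • (1 : Matrix (Fin n) (Fin n) ℂ)) ∨
    1 / ε < matInvNorm p (F - lam • (1 : Matrix (Fin n) (Fin n) ℂ))}

/-- `Σ_ε^p`: union of the `ε`-pseudospectra of all operators in `M(U,V,W)`. -/
def SigmaEps (U V W : Set ℂ) (p : ℝ≥0∞) [Fact (1 ≤ p)] (ε : ℝ) : Set ℂ :=
  {lam | ∃ B : SeqZ p →L[ℂ] SeqZ p, MemM U V W B ∧ lam ∈ pspec ε B}

/-- `Σ_{+,ε}^p`: union of the `ε`-pseudospectra of all operators in `M₊(U,V,W)`. -/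
def SigmaPlusEps (U V W : Set ℂ) (p : ℝ≥0∞) [Fact (1 ≤ p)] (ε : ℝ) : Set ℂ :=
  {lam | ∃ B : SeqN p →L[ℂ] SeqN p, MemMPlus U V W B ∧ lam ∈ pspec ε B}

/-- `p` is favourable for all the (compatible, index zero) shifted triples `(U, V-λ, W)`. -/
def FavAll (U V W : Set ℂ) (p : ℝ≥0∞) [Fact (1 ≤ p)] : Prop :=
  ∀ lam : ℂ, KappaIs U (shiftSet V lam) W 0 → Favourable U (shiftSet V lam) W p

end

/-! A finite tridiagonal matrix over `(U,V,W)` is a finite section of a bi-infinite one over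
`(U,V,W)` (extend its diagonals by constants), and a finite section is a compression of the
operator, so `M_fin,p ≤ M_p`. Conversely, every finite stretch of `B x` consists of interior
rows of a finite section of `B` applied to a finite stretch of `x`, and `ℓᵖ(ℤ)` norms are
controlled by finite stretches, so `‖B‖ ≤ M_fin,p`. Padding the diagonals shows that
`M_{n,p}` is nondecreasing in `n`, hence it converges to its supremum `M_fin,p`. -/

open scoped Matrix lp

theorem Memℓp.infty_mul_left {α 𝕜 : Type*} [NormedRing 𝕜] {p : ℝ≥0∞} {b f : α → 𝕜}
    (hb : Memℓp b ∞) (hf : Memℓp f p) : Memℓp (b * f) p := by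
  obtain ⟨C, hC⟩ := hb.bddAbove
  refine (hf.norm.const_mul C).mono fun i => ?_
  rw [Pi.mul_apply]
  exact (norm_mul_le _ _).trans (mul_le_mul_of_nonneg_right (hC ⟨i, rfl⟩) (norm_nonneg _))

section ExtendZero

variable {α β E : Type*} [NormedAddCommGroup E]

lemma norm_extend_zero_apply_le (e : α ↪ β) (g : α → E) {C : ℝ} (hC : 0 ≤ C)
    (hg : ∀ a, ‖g a‖ ≤ C) (b : β) : ‖Function.extend e g 0 b‖ ≤ C := by
  by_cases h : ∃ a, e a = b
  · obtain ⟨a, rfl⟩ := h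
    simpa [e.injective.extend_apply] using hg a
  · simpa [Function.extend_apply' _ _ _ h] using hC

lemma rpow_norm_extend_zero {q : ℝ} (hq : 0 < q) (e : α ↪ β) (g : α → E) :
    (fun b => ‖Function.extend e g 0 b‖ ^ q) = Function.extend e (fun a => ‖g a‖ ^ q) 0 := by
  ext b
  rw [Function.apply_extend (fun z : E => ‖z‖ ^ q)]
  congr 1
  ext
  simp [Real.zero_rpow hq.ne']

end ExtendZero

namespace lp

variable {α β E : Type*} [NormedAddCommGroup E] {p : ℝ≥0∞} [Fact (1 ≤ p)]

theorem _root_.Memℓp.comp_embedding {f : β → E} (hf : Memℓp f p) (e : α ↪ β) :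
    Memℓp (f ∘ e) p := by
  rcases eq_or_ne p ∞ with rfl | hp
  · exact memℓp_infty (hf.bddAbove.mono (Set.range_comp_subset_range e fun i => ‖f i‖))
  · have hq := (ENNReal.toReal_pos_iff_ne_top p).2 hp
    exact memℓp_gen ((hf.summable hq).comp_injective e.injective)

def comp (f : lp (fun _ : β => E) p) (e : α ↪ β) : lp (fun _ : α => E) p :=
  ⟨f ∘ e, (lp.memℓp f).comp_embedding e⟩

theorem norm_comp_le (f : lp (fun _ : β => E) p) (e : α ↪ β) : ‖lp.comp f e‖ ≤ ‖f‖ := by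
  rcases eq_or_ne p ∞ with rfl | hp
  · exact norm_le_of_forall_le (norm_nonneg f) fun i => norm_apply_le_norm ENNReal.top_ne_zero f _
  · have hq := (ENNReal.toReal_pos_iff_ne_top p).2 hp
    refine norm_le_of_forall_sum_le hq (norm_nonneg f) fun s => ?_
    calc ∑ i ∈ s, ‖f (e i)‖ ^ p.toReal
        = ∑ i ∈ s.map e, ‖f i‖ ^ p.toReal := (Finset.sum_map s e fun i => ‖f i‖ ^ p.toReal).symm
      _ ≤ ‖f‖ ^ p.toReal := sum_rpow_le_norm_rpow hq f _

theorem _root_.Memℓp.extend_zero {g : α → E} (hg : Memℓp g p) (e : α ↪ β) :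
    Memℓp (Function.extend e g 0) p := by
  rcases eq_or_ne p ∞ with rfl | hp
  · obtain ⟨C, hC⟩ := hg.bddAbove
    exact memℓp_infty ⟨max C 0, Set.forall_mem_range.2 fun b =>
      norm_extend_zero_apply_le e g (le_max_right _ _)
        (fun a => (hC ⟨a, rfl⟩).trans (le_max_left _ _)) b⟩
  · have hq := (ENNReal.toReal_pos_iff_ne_top p).2 hp
    apply memℓp_gen
    rw [rpow_norm_extend_zero hq, summable_extend_zero e.injective]
    exact hg.summable hq

noncomputable def extendZero (g : lp (fun _ : α => E) p) (e : α ↪ β) : lp (fun _ : β => E) p :=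
  ⟨Function.extend e g 0, (lp.memℓp g).extend_zero e⟩

theorem norm_extendZero_le (g : lp (fun _ : α => E) p) (e : α ↪ β) :
    ‖lp.extendZero g e‖ ≤ ‖g‖ := by
  rcases eq_or_ne p ∞ with rfl | hp
  · exact norm_le_of_forall_le (norm_nonneg g) (norm_extend_zero_apply_le e g (norm_nonneg g)
      fun a => norm_apply_le_norm ENNReal.top_ne_zero g a)
  · have hq := (ENNReal.toReal_pos_iff_ne_top p).2 hp
    refine norm_le_of_tsum_le hq (norm_nonneg g) (le_of_eq ?_)
    rw [norm_rpow_eq_tsum hq g]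
    exact (congrArg tsum (rpow_norm_extend_zero hq e g)).trans (tsum_extend_zero e.injective _)

section Operators

variable {𝕜 : Type*} [NontriviallyNormedField 𝕜] [NormedSpace 𝕜 E]

noncomputable def compCLM (e : α ↪ β) : lp (fun _ : β => E) p →L[𝕜] lp (fun _ : α => E) p :=
  LinearMap.mkContinuous
    { toFun := fun f => lp.comp f e
      map_add' := fun _ _ => rfl
      map_smul' := fun _ _ => rfl }
    1 fun f => by rw [one_mul]; exact norm_comp_le f e

lemma norm_compCLM_le (e : α ↪ β) : ‖(compCLM e : lp (fun _ : β => E) p →L[𝕜] _)‖ ≤ 1 :=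
  LinearMap.mkContinuous_norm_le _ zero_le_one _

theorem norm_infty_mul_le (b : lp (fun _ : α => 𝕜) ∞) (f : lp (fun _ : α => 𝕜) p) :
    ‖(⟨b * f, (lp.memℓp b).infty_mul_left (lp.memℓp f)⟩ : lp (fun _ : α => 𝕜) p)‖ ≤
      ‖b‖ * ‖f‖ := by
  have hp : p ≠ 0 := (zero_lt_one.trans_le Fact.out).ne'
  calc _ ≤ ‖‖b‖ • lp.toNorm f‖ := lp.norm_mono hp fun i => calc
          ‖b i * f i‖ = ‖b i‖ * ‖f i‖ := norm_mul _ _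
          _ ≤ ‖b‖ * ‖f i‖ :=
            mul_le_mul_of_nonneg_right (norm_apply_le_norm ENNReal.top_ne_zero b i) (norm_nonneg _)
          _ = ‖(‖b‖ • lp.toNorm f) i‖ := by
            rw [lp.coeFn_smul, Pi.smul_apply, smul_eq_mul, norm_mul, norm_norm]
            exact congrArg _ (norm_norm _).symm
    _ = ‖b‖ * ‖f‖ := by rw [norm_const_smul hp, norm_norm, norm_toNorm]

noncomputable def mulCLM (b : lp (fun _ : α => 𝕜) ∞) :
    lp (fun _ : α => 𝕜) p →L[𝕜] lp (fun _ : α => 𝕜) p :=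
  LinearMap.mkContinuous
    { toFun := fun f => ⟨b * f, (lp.memℓp b).infty_mul_left (lp.memℓp f)⟩
      map_add' := fun f g => lp.ext (mul_add (⇑b) f g)
      map_smul' := fun c f => lp.ext (mul_smul_comm c (⇑b) f) }
    ‖b‖ (norm_infty_mul_le b)

lemma norm_mulCLM_le (b : lp (fun _ : α => 𝕜) ∞) :
    ‖(mulCLM b : lp (fun _ : α => 𝕜) p →L[𝕜] _)‖ ≤ ‖b‖ :=
  LinearMap.mkContinuous_norm_le _ (norm_nonneg b) _

end Operators

end lp

theorem tendsto_csSup_of_isLUB_iUnion {S : ℕ → Set ℝ} {a : ℝ} (hne : ∀ n, (S n).Nonempty)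
    (hmono : ∀ ⦃m n⦄, m ≤ n → ∀ x ∈ S m, ∃ y ∈ S n, x ≤ y) (ha : IsLUB (⋃ n, S n) a) :
    Filter.Tendsto (fun n => sSup (S n)) Filter.atTop (nhds a) := by
  have hbdd : ∀ n, BddAbove (S n) := fun n => ⟨a, fun x hx => ha.1 (Set.mem_iUnion_of_mem n hx)⟩
  refine tendsto_atTop_isLUB (fun m n hmn => csSup_le (hne m) fun x hx => ?_)
    ⟨?_, fun b hb => ha.2 ?_⟩
  · obtain ⟨y, hy, hxy⟩ := hmono hmn x hx
    exact hxy.trans (le_csSup (hbdd n) hy)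
  · rintro _ ⟨n, rfl⟩
    exact csSup_le (hne n) fun x hx => ha.1 (Set.mem_iUnion_of_mem n hx)
  · intro x hx
    obtain ⟨n, hn⟩ := Set.mem_iUnion.1 hx
    exact (le_csSup (hbdd n) hn).trans (hb ⟨n, rfl⟩)

lemma Fintype.sum_ite_eq_extend {α β M : Type*} [Fintype α] [DecidableEq β] [AddCommMonoid M]
    (ι : α ↪ β) (g : α → M) (t : β) :
    ∑ a, (if ι a = t then g a else 0) = Function.extend ι g 0 t := by
  by_cases h : ∃ a, ι a = t
  · obtain ⟨a, rfl⟩ := h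
    rw [Finset.sum_eq_single a (fun b _ hb => if_neg (ι.injective.ne hb)) (by simp), if_pos rfl,
      ι.injective.extend_apply]
  · rw [Function.extend_apply' _ _ _ h]
    exact Finset.sum_eq_zero fun a _ => if_neg fun ha => h ⟨a, ha⟩

def embedAt (l : ℤ) (m : ℕ) : Fin m ↪ ℤ :=
  ⟨fun j => l + j, fun a b h => Fin.ext (by simpa using h)⟩

@[simp] lemma embedAt_apply (l : ℤ) (m : ℕ) (j : Fin m) : embedAt l m j = l + j := rfl

lemma Finset.exists_subset_map_embedAt (s : Finset ℤ) :
    ∃ l k, s ⊆ Finset.univ.map (embedAt l k) := by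
  obtain ⟨a, ha⟩ := s.bddBelow
  obtain ⟨b, hb⟩ := s.bddAbove
  refine ⟨a, (b + 1 - a).toNat, fun i hi => Finset.mem_map.2 ⟨⟨(i - a).toNat, ?_⟩, mem_univ _, ?_⟩⟩
  · have := ha hi; have := hb hi; omega
  · have := ha hi; simp only [embedAt_apply]; omega

section FiniteVectors

variable {p : ℝ≥0∞} [Fact (1 ≤ p)] {m n : ℕ}

lemma pVecNorm_eq_norm_lp (x : Fin n → ℂ) :
    pVecNorm p x = ‖(⟨x, Memℓp.all x⟩ : lp (fun _ : Fin n => ℂ) p)‖ :=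
  equiv_lpPiLp_norm (⟨x, Memℓp.all x⟩ : lp (fun _ : Fin n => ℂ) p)

lemma pVecNorm_nonneg (x : Fin n → ℂ) : 0 ≤ pVecNorm p x := norm_nonneg _

lemma pVecNorm_comp_le (x : Fin n → ℂ) (e : Fin m ↪ Fin n) :
    pVecNorm p (x ∘ e) ≤ pVecNorm p x := by
  rw [pVecNorm_eq_norm_lp (p := p), pVecNorm_eq_norm_lp (p := p)]
  exact lp.norm_comp_le (⟨x, Memℓp.all x⟩ : lp (fun _ : Fin n => ℂ) p) e

lemma pVecNorm_comp_le_norm (f : SeqZ p) (e : Fin m ↪ ℤ) : pVecNorm p (⇑f ∘ e) ≤ ‖f‖ := by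
  rw [pVecNorm_eq_norm_lp]
  exact lp.norm_comp_le f e

lemma pVecNorm_extend_le (x : Fin m → ℂ) (e : Fin m ↪ Fin n) :
    pVecNorm p (Function.extend e x 0) ≤ pVecNorm p x := by
  rw [pVecNorm_eq_norm_lp (p := p), pVecNorm_eq_norm_lp (p := p)]
  exact lp.norm_extendZero_le (⟨x, Memℓp.all x⟩ : lp (fun _ : Fin m => ℂ) p) e

lemma norm_extendZero_le_pVecNorm (x : Fin m → ℂ) (e : Fin m ↪ ℤ) :
    ‖(lp.extendZero ⟨x, Memℓp.all x⟩ e : SeqZ p)‖ ≤ pVecNorm p x := by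
  rw [pVecNorm_eq_norm_lp]
  exact lp.norm_extendZero_le (⟨x, Memℓp.all x⟩ : lp (fun _ : Fin m => ℂ) p) e

theorem norm_le_of_forall_pVecNorm_window_le (f : SeqZ p) {C : ℝ}
    (h : ∀ l k, pVecNorm p (⇑f ∘ embedAt l k) ≤ C) : ‖f‖ ≤ C := by
  have hC : 0 ≤ C := (pVecNorm_nonneg _).trans (h 0 0)
  rcases eq_or_ne p ∞ with rfl | hp
  · refine lp.norm_le_of_forall_le hC fun i => ?_
    have := lp.norm_apply_le_norm ENNReal.top_ne_zero
      (⟨⇑f ∘ embedAt i 1, Memℓp.all (p := ∞) _⟩ : lp (fun _ : Fin 1 => ℂ) ∞) 0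
    rw [← pVecNorm_eq_norm_lp] at this
    simpa using this.trans (h i 1)
  · have hq := (ENNReal.toReal_pos_iff_ne_top p).2 hp
    refine lp.norm_le_of_forall_sum_le hq hC fun s => ?_
    obtain ⟨l, k, hs⟩ := s.exists_subset_map_embedAt
    calc ∑ i ∈ s, ‖f i‖ ^ p.toReal
        ≤ ∑ i ∈ Finset.univ.map (embedAt l k), ‖f i‖ ^ p.toReal :=
          Finset.sum_le_sum_of_subset_of_nonneg hs fun _ _ _ => by positivity
      _ = ∑ j, ‖(⇑f ∘ embedAt l k) j‖ ^ p.toReal := Finset.sum_map _ _ _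
      _ ≤ pVecNorm p (⇑f ∘ embedAt l k) ^ p.toReal := by
          rw [pVecNorm_eq_norm_lp]
          exact lp.sum_rpow_le_norm_rpow hq
            (⟨_, Memℓp.all (p := p) _⟩ : lp (fun _ : Fin k => ℂ) p) Finset.univ
      _ ≤ C ^ p.toReal := Real.rpow_le_rpow (pVecNorm_nonneg _) (h l k) hq.le

end FiniteVectors

noncomputable def Matrix.toLpCLM {n : ℕ} (p : ℝ≥0∞) [Fact (1 ≤ p)]
    (F : Matrix (Fin n) (Fin n) ℂ) : WithLp p (Fin n → ℂ) →L[ℂ] WithLp p (Fin n → ℂ) :=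
  LinearMap.toContinuousLinearMap (Matrix.toLpLin p p F)

section MatrixNorm

variable {p : ℝ≥0∞} [Fact (1 ≤ p)] {n : ℕ}

lemma matOpNorm_eq_norm_toLpCLM (F : Matrix (Fin n) (Fin n) ℂ) :
    matOpNorm p F = ‖F.toLpCLM p‖ := by
  rw [ContinuousLinearMap.norm_def, matOpNorm]
  congr 1
  ext c
  exact and_congr_right fun _ => ⟨fun h x => h x.ofLp, fun h x => h (WithLp.toLp p x)⟩

lemma matOpNorm_nonneg (F : Matrix (Fin n) (Fin n) ℂ) : 0 ≤ matOpNorm p F := by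
  rw [matOpNorm_eq_norm_toLpCLM]
  exact norm_nonneg _

lemma pVecNorm_mulVec_le (F : Matrix (Fin n) (Fin n) ℂ) (x : Fin n → ℂ) :
    pVecNorm p (F *ᵥ x) ≤ matOpNorm p F * pVecNorm p x := by
  rw [matOpNorm_eq_norm_toLpCLM]
  exact (F.toLpCLM p).le_opNorm (WithLp.toLp p x)

lemma matOpNorm_le_of_forall {F : Matrix (Fin n) (Fin n) ℂ} {c : ℝ} (hc : 0 ≤ c)
    (h : ∀ x, pVecNorm p (F *ᵥ x) ≤ c * pVecNorm p x) : matOpNorm p F ≤ c :=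
  csInf_le ⟨0, fun _ hc => hc.1⟩ ⟨hc, h⟩

end MatrixNorm

section Tridiagonal

variable {p : ℝ≥0∞} [Fact (1 ≤ p)] {u v w : ℤ → ℂ}

def tridiagApply (u v w x : ℤ → ℂ) (i : ℤ) : ℂ :=
  u i * x (i - 1) + v i * x i + w i * x (i + 1)

/-- The finite section `(a_{ij})_{i,j=l}^{l+m-1}` of the bi-infinite tridiagonal matrix. -/
def jacobiWindow (u v w : ℤ → ℂ) (l : ℤ) (m : ℕ) : Matrix (Fin m) (Fin m) ℂ :=
  JacobiMatrix (u ∘ embedAt l m) (v ∘ embedAt l m) (w ∘ embedAt l m)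

lemma jacobiWindow_extend {m : ℕ} (a b c : Fin m → ℂ) (a' b' c' : ℤ → ℂ) (l : ℤ) :
    jacobiWindow (Function.extend (embedAt l m) a a') (Function.extend (embedAt l m) b b')
      (Function.extend (embedAt l m) c c') l m = JacobiMatrix a b c := by
  simp only [jacobiWindow, Function.extend_comp (embedAt l m).injective]

lemma jacobiWindow_mulVec (u v w : ℤ → ℂ) (l : ℤ) {m : ℕ} (x : Fin m → ℂ) (i : Fin m) :
    (jacobiWindow u v w l m *ᵥ x) i =
      tridiagApply u v w (Function.extend (embedAt l m) x 0) (l + i) := by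
  have hrow : ∀ j, jacobiWindow u v w l m i j * x j =
      u (l + i) * (if embedAt l m j = l + i - 1 then x j else 0) +
        v (l + i) * (if embedAt l m j = l + i then x j else 0) +
        w (l + i) * (if embedAt l m j = l + i + 1 then x j else 0) := by
    intro j
    have e₁ : l + (j : ℤ) = l + i - 1 ↔ (i : ℤ) = j + 1 := by omega
    have e₂ : l + (j : ℤ) = l + i ↔ i = j := by rw [Fin.ext_iff]; omega
    have e₃ : l + (j : ℤ) = l + i + 1 ↔ (j : ℤ) = i + 1 := by omega
    simp only [jacobiWindow, JacobiMatrix, embedAt_apply, Function.comp_apply, e₁, e₂, e₃]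
    split_ifs <;> first | omega | ring
  simp only [Matrix.mulVec, dotProduct, hrow, Finset.sum_add_distrib, ← Finset.mul_sum,
    Fintype.sum_ite_eq_extend, tridiagApply]

lemma matOpNorm_jacobiWindow_le_norm {A : SeqZ p →L[ℂ] SeqZ p} (hA : BiActs A u v w) (l : ℤ)
    (m : ℕ) : matOpNorm p (jacobiWindow u v w l m) ≤ ‖A‖ := by
  refine matOpNorm_le_of_forall (norm_nonneg A) fun x => ?_
  set X : SeqZ p := lp.extendZero ⟨x, Memℓp.all x⟩ (embedAt l m)
  have hrows : jacobiWindow u v w l m *ᵥ x = ⇑(A X) ∘ embedAt l m :=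
    funext fun i => by rw [jacobiWindow_mulVec, Function.comp_apply, hA]; rfl
  calc pVecNorm p (jacobiWindow u v w l m *ᵥ x) ≤ ‖A X‖ := hrows ▸ pVecNorm_comp_le_norm _ _
    _ ≤ ‖A‖ * ‖X‖ := A.le_opNorm X
    _ ≤ ‖A‖ * pVecNorm p x :=
      mul_le_mul_of_nonneg_left (norm_extendZero_le_pVecNorm x _) (norm_nonneg A)

lemma matOpNorm_jacobiWindow_mono (u v w : ℤ → ℂ) (l : ℤ) {m n : ℕ} (hmn : m ≤ n) :
    matOpNorm p (jacobiWindow u v w l m) ≤ matOpNorm p (jacobiWindow u v w l n) := by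
  refine matOpNorm_le_of_forall (matOpNorm_nonneg _) fun x => ?_
  set x' := Function.extend (Fin.castLEEmb hmn) x 0
  have hext : Function.extend (embedAt l n) x' 0 = Function.extend (embedAt l m) x 0 :=
    ((Fin.castLEEmb hmn).injective.extend_comp (embedAt l n).injective x 0).symm
  have hrows :
      jacobiWindow u v w l m *ᵥ x = (jacobiWindow u v w l n *ᵥ x') ∘ Fin.castLEEmb hmn :=
    funext fun i => by rw [Function.comp_apply, jacobiWindow_mulVec, jacobiWindow_mulVec, hext]; rfl
  calc pVecNorm p (jacobiWindow u v w l m *ᵥ x)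
      ≤ pVecNorm p (jacobiWindow u v w l n *ᵥ x') := hrows ▸ pVecNorm_comp_le _ _
    _ ≤ matOpNorm p (jacobiWindow u v w l n) * pVecNorm p x' := pVecNorm_mulVec_le _ _
    _ ≤ matOpNorm p (jacobiWindow u v w l n) * pVecNorm p x :=
      mul_le_mul_of_nonneg_left (pVecNorm_extend_le _ _) (matOpNorm_nonneg _)

lemma extend_comp_embedAt_apply (x : ℤ → ℂ) {l i : ℤ} {m : ℕ} (h₁ : l ≤ i) (h₂ : i < l + m) :
    Function.extend (embedAt l m) (x ∘ embedAt l m) 0 i = x i := by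
  obtain ⟨j, rfl⟩ : ∃ j : Fin m, embedAt l m j = i :=
    ⟨⟨(i - l).toNat, by omega⟩, by simp only [embedAt_apply]; omega⟩
  exact (embedAt l m).injective.extend_apply _ _ _

theorem norm_le_of_forall_matOpNorm_jacobiWindow_le {A : SeqZ p →L[ℂ] SeqZ p}
    (hA : BiActs A u v w) {K : ℝ} (hK : ∀ l m, matOpNorm p (jacobiWindow u v w l m) ≤ K) :
    ‖A‖ ≤ K := by
  have hK₀ : 0 ≤ K := (matOpNorm_nonneg _).trans (hK 0 0)
  refine A.opNorm_le_bound hK₀ fun x => norm_le_of_forall_pVecNorm_window_le (A x) fun l k => ?_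
  -- rows `l, …, l + k - 1` of `A x` are interior rows of the window of length `k + 2` at `l - 1`
  set xw := ⇑x ∘ embedAt (l - 1) (k + 2)
  let ι : Fin k ↪ Fin (k + 2) := (Fin.succEmb k).trans Fin.castSuccEmb
  have hrows : ⇑(A x) ∘ embedAt l k = (jacobiWindow u v w (l - 1) (k + 2) *ᵥ xw) ∘ ι := by
    funext j
    have := j.isLt
    have hX := fun t (h₁ : l - 1 ≤ t) (h₂ : t < l - 1 + (k + 2 : ℕ)) =>
      extend_comp_embedAt_apply (⇑x) h₁ h₂
    have hι : l - 1 + ((ι j : ℕ) : ℤ) = l + j := by simp [ι]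
    simp only [Function.comp_apply, jacobiWindow_mulVec, tridiagApply, embedAt_apply, hι]
    rw [hA, hX _ (by omega) (by omega), hX _ (by omega) (by omega), hX _ (by omega) (by omega)]
  calc pVecNorm p (⇑(A x) ∘ embedAt l k)
      ≤ pVecNorm p (jacobiWindow u v w (l - 1) (k + 2) *ᵥ xw) := hrows ▸ pVecNorm_comp_le _ _
    _ ≤ matOpNorm p (jacobiWindow u v w (l - 1) (k + 2)) * pVecNorm p xw :=
      pVecNorm_mulVec_le _ _
    _ ≤ K * ‖x‖ := mul_le_mul (hK _ _) (pVecNorm_comp_le_norm x _) (pVecNorm_nonneg _) hK₀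

noncomputable def tridiagCLM (u v w : ℓ^∞(ℤ, ℂ)) : SeqZ p →L[ℂ] SeqZ p :=
  lp.mulCLM u ∘L lp.compCLM (Equiv.subRight 1).toEmbedding + lp.mulCLM v +
    lp.mulCLM w ∘L lp.compCLM (Equiv.addRight 1).toEmbedding

lemma biActs_tridiagCLM (u v w : ℓ^∞(ℤ, ℂ)) : BiActs (tridiagCLM (p := p) u v w) u v w :=
  fun _ _ => rfl

lemma norm_tridiagCLM_le (u v w : ℓ^∞(ℤ, ℂ)) :
    ‖(tridiagCLM u v w : SeqZ p →L[ℂ] SeqZ p)‖ ≤ ‖u‖ + ‖v‖ + ‖w‖ := by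
  have hshift : ∀ (b : ℓ^∞(ℤ, ℂ)) (e : ℤ ≃ ℤ),
      ‖(lp.mulCLM b ∘L lp.compCLM e.toEmbedding : SeqZ p →L[ℂ] SeqZ p)‖ ≤ ‖b‖ := fun b e =>
    calc _ ≤ ‖(lp.mulCLM b : SeqZ p →L[ℂ] SeqZ p)‖ *
          ‖(lp.compCLM e.toEmbedding : SeqZ p →L[ℂ] SeqZ p)‖ :=
          ContinuousLinearMap.opNorm_comp_le _ _
      _ ≤ ‖b‖ * 1 :=
          mul_le_mul (lp.norm_mulCLM_le b) (lp.norm_compCLM_le _) (norm_nonneg _) (norm_nonneg b)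
      _ = ‖b‖ := mul_one _
  exact norm_add₃_le.trans
    (add_le_add (add_le_add (hshift u _) (lp.norm_mulCLM_le v)) (hshift w _))

lemma BiActs.eq_tridiagCLM {A : SeqZ p →L[ℂ] SeqZ p} {u v w : ℓ^∞(ℤ, ℂ)}
    (hA : BiActs A u v w) : A = tridiagCLM u v w :=
  ContinuousLinearMap.ext fun x => lp.ext <| funext fun i => hA x i

lemma exists_biActs (hu : Memℓp u ∞) (hv : Memℓp v ∞) (hw : Memℓp w ∞) :
    ∃ A : SeqZ p →L[ℂ] SeqZ p, BiActs A u v w :=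
  ⟨tridiagCLM ⟨u, hu⟩ ⟨v, hv⟩ ⟨w, hw⟩, biActs_tridiagCLM _ _ _⟩

lemma norm_le_of_biActs {A : SeqZ p →L[ℂ] SeqZ p} (hA : BiActs A u v w) {Cu Cv Cw : ℝ}
    (hu : ∀ i, ‖u i‖ ≤ Cu) (hv : ∀ i, ‖v i‖ ≤ Cv) (hw : ∀ i, ‖w i‖ ≤ Cw) :
    ‖A‖ ≤ Cu + Cv + Cw := by
  have hmem : ∀ {b : ℤ → ℂ} {C : ℝ}, (∀ i, ‖b i‖ ≤ C) → Memℓp b ∞ := fun h =>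
    memℓp_infty ⟨_, Set.forall_mem_range.2 h⟩
  rw [hA.eq_tridiagCLM (u := ⟨u, hmem hu⟩) (v := ⟨v, hmem hv⟩) (w := ⟨w, hmem hw⟩)]
  refine (norm_tridiagCLM_le _ _ _).trans (add_le_add (add_le_add ?_ ?_) ?_) <;>
    exact lp.norm_le_of_forall_le' _ ‹_›

end Tridiagonal

section NormSets

variable {U V W : Set ℂ} {p : ℝ≥0∞} [Fact (1 ≤ p)]

lemma RangesIn.comp {ι κ : Type*} {u v w : κ → ℂ} (h : RangesIn U V W u v w) (f : ι → κ) :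
    RangesIn U V W (u ∘ f) (v ∘ f) (w ∘ f) :=
  ⟨fun _ => h.1 _, fun _ => h.2.1 _, fun _ => h.2.2 _⟩

lemma RangesIn.extend {ι κ : Type*} {u v w : ι → ℂ} (h : RangesIn U V W u v w) (f : ι → κ)
    {u₀ v₀ w₀ : ℂ} (hu₀ : u₀ ∈ U) (hv₀ : v₀ ∈ V) (hw₀ : w₀ ∈ W) :
    RangesIn U V W (Function.extend f u fun _ => u₀) (Function.extend f v fun _ => v₀)
      (Function.extend f w fun _ => w₀) := by
  classical
  refine ⟨fun k => ?_, fun k => ?_, fun k => ?_⟩ <;> rw [Function.extend_def] <;> split_ifs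
  exacts [h.1 _, hu₀, h.2.1 _, hv₀, h.2.2 _, hw₀]

lemma Bornology.IsBounded.memℓp_infty {ι : Type*} {S : Set ℂ} (hS : Bornology.IsBounded S)
    {u : ι → ℂ} (hu : ∀ i, u i ∈ S) : Memℓp u ∞ :=
  let ⟨C, hC⟩ := hS.exists_norm_le
  _root_.memℓp_infty ⟨C, by rintro _ ⟨i, rfl⟩; exact hC _ (hu i)⟩

variable (U V W p) in
def jacobiNormSet (n : ℕ) : Set ℝ :=
  {x | ∃ u v w : Fin n → ℂ, RangesIn U V W u v w ∧ x = matOpNorm p (JacobiMatrix u v w)}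

lemma MnormFin_eq : MnormFin U V W p = sSup (⋃ n, jacobiNormSet U V W p n) := by
  simp only [MnormFin, jacobiNormSet, Set.iUnion_ofPred]

lemma bddAbove_norm_memM (hU : Bornology.IsBounded U) (hV : Bornology.IsBounded V)
    (hW : Bornology.IsBounded W) :
    BddAbove {x : ℝ | ∃ B : SeqZ p →L[ℂ] SeqZ p, MemM U V W B ∧ x = ‖B‖} := by
  obtain ⟨Cu, hCu⟩ := hU.exists_norm_le
  obtain ⟨Cv, hCv⟩ := hV.exists_norm_le
  obtain ⟨Cw, hCw⟩ := hW.exists_norm_le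
  refine ⟨Cu + Cv + Cw, ?_⟩
  rintro _ ⟨B, ⟨u, v, w, ⟨hu, hv, hw⟩, hB⟩, rfl⟩
  exact norm_le_of_biActs hB (fun i => hCu _ (hu i)) (fun i => hCv _ (hv i))
    (fun i => hCw _ (hw i))

lemma matOpNorm_le_Mnorm {u₀ v₀ w₀ : ℂ} (hu₀ : u₀ ∈ U) (hv₀ : v₀ ∈ V) (hw₀ : w₀ ∈ W)
    (hU : Bornology.IsBounded U) (hV : Bornology.IsBounded V) (hW : Bornology.IsBounded W)
    {n : ℕ} {a b c : Fin n → ℂ} (h : RangesIn U V W a b c) :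
    matOpNorm p (JacobiMatrix a b c) ≤ Mnorm U V W p := by
  have hR := h.extend (embedAt 0 n) hu₀ hv₀ hw₀
  obtain ⟨A, hA⟩ := exists_biActs (p := p) (hU.memℓp_infty hR.1) (hV.memℓp_infty hR.2.1)
    (hW.memℓp_infty hR.2.2)
  calc matOpNorm p (JacobiMatrix a b c)
      = matOpNorm p (jacobiWindow (Function.extend (embedAt 0 n) a fun _ => u₀)
          (Function.extend (embedAt 0 n) b fun _ => v₀)
          (Function.extend (embedAt 0 n) c fun _ => w₀) 0 n) := by rw [jacobiWindow_extend]
    _ ≤ ‖A‖ := matOpNorm_jacobiWindow_le_norm hA 0 n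
    _ ≤ Mnorm U V W p := le_csSup (bddAbove_norm_memM hU hV hW) ⟨A, ⟨_, _, _, hR, hA⟩, rfl⟩

lemma exists_ge_of_mem_jacobiNormSet {u₀ v₀ w₀ : ℂ} (hu₀ : u₀ ∈ U) (hv₀ : v₀ ∈ V)
    (hw₀ : w₀ ∈ W) {m n : ℕ} (hmn : m ≤ n) {x : ℝ} (hx : x ∈ jacobiNormSet U V W p m) :
    ∃ y ∈ jacobiNormSet U V W p n, x ≤ y := by
  obtain ⟨a, b, c, h, rfl⟩ := hx
  have hR := h.extend (embedAt 0 m) hu₀ hv₀ hw₀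
  refine ⟨_, ⟨_, _, _, hR.comp (embedAt 0 n), rfl⟩, ?_⟩
  rw [← jacobiWindow_extend a b c (fun _ => u₀) (fun _ => v₀) (fun _ => w₀) 0]
  exact matOpNorm_jacobiWindow_mono _ _ _ 0 hmn

theorem isLUB_jacobiNormSet (hU : U.Nonempty) (hUb : Bornology.IsBounded U) (hV : V.Nonempty)
    (hVb : Bornology.IsBounded V) (hW : W.Nonempty) (hWb : Bornology.IsBounded W) :
    IsLUB (⋃ n, jacobiNormSet U V W p n) (Mnorm U V W p) := by
  obtain ⟨u₀, hu₀⟩ := hU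
  obtain ⟨v₀, hv₀⟩ := hV
  obtain ⟨w₀, hw₀⟩ := hW
  refine ⟨fun x hx => ?_, fun K hK => ?_⟩
  · obtain ⟨n, a, b, c, h, rfl⟩ := Set.mem_iUnion.1 hx
    exact matOpNorm_le_Mnorm hu₀ hv₀ hw₀ hUb hVb hWb h
  · have hK₀ : 0 ≤ K := (matOpNorm_nonneg _).trans
      (hK (Set.mem_iUnion.2 ⟨0, finZeroElim, finZeroElim, finZeroElim,
        ⟨finZeroElim, finZeroElim, finZeroElim⟩, rfl⟩))
    refine Real.sSup_le ?_ hK₀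
    rintro _ ⟨B, ⟨u, v, w, h, hB⟩, rfl⟩
    exact norm_le_of_forall_matOpNorm_jacobiWindow_le hB fun l m =>
      hK (Set.mem_iUnion.2 ⟨m, _, _, _, h.comp (embedAt l m), rfl⟩)

end NormSets

/-- `M_{fin,p} = lim_{n→∞} M_{n,p} = M_p`. -/
theorem statement14 (U V W : Set ℂ)
    (hUne : U.Nonempty) (hUc : IsCompact U) (hVne : V.Nonempty) (hVc : IsCompact V)
    (hWne : W.Nonempty) (hWc : IsCompact W)
    (p : ℝ≥0∞) [Fact (1 ≤ p)] :
    MnormFin U V W p = Mnorm U V W p ∧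
    Filter.Tendsto (fun n => MnormFinN U V W p n) Filter.atTop (nhds (Mnorm U V W p)) := by
  have hLUB := isLUB_jacobiNormSet (p := p) hUne hUc.isBounded hVne hVc.isBounded hWne
    hWc.isBounded
  obtain ⟨u₀, hu₀⟩ := hUne
  obtain ⟨v₀, hv₀⟩ := hVne
  obtain ⟨w₀, hw₀⟩ := hWne
  have hne : ∀ n, (jacobiNormSet U V W p n).Nonempty := fun n =>
    ⟨_, fun _ => u₀, fun _ => v₀, fun _ => w₀, ⟨fun _ => hu₀, fun _ => hv₀, fun _ => hw₀⟩, rfl⟩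
  refine ⟨?_, ?_⟩
  · rw [MnormFin_eq]
    exact hLUB.csSup_eq ((hne 0).mono (Set.subset_iUnion _ 0))
  · exact tendsto_csSup_of_isLUB_iUnion hne
      (fun _ _ hmn _ => exists_ge_of_mem_jacobiNormSet hu₀ hv₀ hw₀ hmn) hLUB
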